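/- The connection formula h̃_{n,α}(x,ω|q) = (q;q)_n ∑_{k=0}^{⌊n/2⌋} q^{-2nk+k(2k+1)} (-ω ⊕_{q²} y)^k h̃_{n-2k,α}(x,y|q) / ((q²;q²)_k (q;q)_{n-2k}) holds, where (-ω ⊕_{q²} y)^k = (q²;q²)_k ∑_{j=0}^k q^{2·j(j-1)/2} (-ω)^{k-j} y^j/((q²;q²)_j (q²;q²)_{k-j}) is the Hahn q²-addition power. -/

import Mathlib

open Finset

/-- q-shifted factorial (a;Q)_n with base Q -/
noncomputable def qPochGen (Q a : ℝ) (n : ℕ) : ℝ := ∏ j ∈ Finset.range n, (1 - a * Q ^ j)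

/-- (q;q)_n -/
noncomputable def qPoch (q : ℝ) (n : ℕ) : ℝ := qPochGen q q n

/-- generalized q-shifted factorial (q;q)_{n,α}, via splitting formulas -/
noncomputable def gqPoch (q α : ℝ) (n : ℕ) : ℝ :=
  qPochGen (q ^ 2) (q ^ 2) (n / 2) * qPochGen (q ^ 2) (Real.rpow q (2 * α + 2)) (n / 2 + n % 2)

/-- generalized discrete q-Hermite II polynomials -/
noncomputable def hTilde (q α x y : ℝ) (n : ℕ) : ℝ :=
  qPoch q n * ∑ k ∈ Finset.range (n / 2 + 1),
    (-1 : ℝ) ^ k * q ^ (-2 * (n : ℤ) * (k : ℤ) + (k : ℤ) * (2 * (k : ℤ) + 1)) *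
      x ^ (n - 2 * k) * y ^ k / (gqPoch q α (n - 2 * k) * qPoch (q ^ 2) k)

/-- Hahn q²-addition power (a ⊕_{q²} b)^k -/
noncomputable def hahnAddSq (q a b : ℝ) (k : ℕ) : ℝ :=
  qPoch (q ^ 2) k * ∑ j ∈ Finset.range (k + 1),
    q ^ (j * (j - 1)) * a ^ (k - j) * b ^ j / (qPoch (q ^ 2) j * qPoch (q ^ 2) (k - j))

/-! ### Auxiliary lemmas -/

lemma qPochGen_pos {Q a : ℝ} (hQ0 : 0 ≤ Q) (hQ1 : Q ≤ 1) (ha0 : 0 ≤ a) (ha1 : a < 1)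
    (m : ℕ) : 0 < qPochGen Q a m := by
  unfold qPochGen
  apply Finset.prod_pos
  intro j _
  have h1 : Q ^ j ≤ 1 := pow_le_one₀ hQ0 hQ1
  have h2 : 0 ≤ Q ^ j := pow_nonneg hQ0 j
  nlinarith

lemma qPoch_ne_zero {q : ℝ} (hq : 0 < q) (hq1 : q < 1) (m : ℕ) : qPoch q m ≠ 0 :=
  ne_of_gt (qPochGen_pos (le_of_lt hq) (le_of_lt hq1) (le_of_lt hq) hq1 m)

lemma sq_pos_lt_one {q : ℝ} (hq : 0 < q) (hq1 : q < 1) : 0 < q ^ 2 ∧ q ^ 2 < 1 :=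
  ⟨by positivity, by nlinarith⟩

lemma qPochSq_ne_zero {q : ℝ} (hq : 0 < q) (hq1 : q < 1) (m : ℕ) : qPoch (q ^ 2) m ≠ 0 := by
  obtain ⟨h0, h1⟩ := sq_pos_lt_one hq hq1
  exact qPoch_ne_zero h0 h1 m

lemma gqPoch_ne_zero {q α : ℝ} (hq : 0 < q) (hq1 : q < 1) (hα : -1 < α) (m : ℕ) :
    gqPoch q α m ≠ 0 := by
  obtain ⟨h0, h1⟩ := sq_pos_lt_one hq hq1
  have hr0 : 0 ≤ Real.rpow q (2 * α + 2) := le_of_lt (Real.rpow_pos_of_pos hq _)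
  have hr1 : Real.rpow q (2 * α + 2) < 1 :=
    Real.rpow_lt_one (le_of_lt hq) hq1 (by linarith)
  exact ne_of_gt (mul_pos
    (qPochGen_pos (le_of_lt h0) (le_of_lt h1) (le_of_lt h0) h1 _)
    (qPochGen_pos (le_of_lt h0) (le_of_lt h1) hr0 hr1 _))

lemma qPoch_zero (Q : ℝ) : qPoch Q 0 = 1 := by simp [qPoch, qPochGen]

lemma qPoch_succ (Q : ℝ) (m : ℕ) : qPoch Q (m + 1) = qPoch Q m * (1 - Q ^ (m + 1)) := by
  unfold qPoch qPochGen
  rw [Finset.prod_range_succ, pow_succ']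

lemma one_sub_sq_pow_ne_zero {q : ℝ} (hq : 0 < q) (hq1 : q < 1) (m : ℕ) :
    (1 : ℝ) - (q ^ 2) ^ (m + 1) ≠ 0 := by
  obtain ⟨h0, h1⟩ := sq_pos_lt_one hq hq1
  have h2 : (q ^ 2) ^ (m + 1) < 1 := pow_lt_one₀ (le_of_lt h0) h1 (by omega)
  intro h; linarith

/-! ### Triangle sum reindexing lemmas -/

lemma sum_triangle (M : ℕ) (f : ℕ → ℕ → ℝ) :
    ∑ k ∈ range (M + 1), ∑ j ∈ range (k + 1), f k j
      = ∑ j ∈ range (M + 1), ∑ s ∈ range (M + 1 - j), f (j + s) j := by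
  have h1 : ∀ k ∈ range (M + 1), ∑ j ∈ range (k + 1), f k j
      = ∑ j ∈ range (M + 1), if j ≤ k then f k j else 0 := by
    intro k hk
    have hk' : k < M + 1 := mem_range.mp hk
    have hset : Finset.filter (fun j => j ≤ k) (range (M + 1)) = range (k + 1) := by
      ext j
      simp only [Finset.mem_filter, Finset.mem_range]
      omega
    rw [← Finset.sum_filter, hset]
  rw [Finset.sum_congr rfl h1, Finset.sum_comm]
  refine Finset.sum_congr rfl fun j _ => ?_
  have hset : Finset.filter (fun k => j ≤ k) (range (M + 1)) = Ico j (M + 1) := by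
    ext k
    simp only [Finset.mem_filter, Finset.mem_range, Finset.mem_Ico]
    omega
  rw [← Finset.sum_filter, hset, Finset.sum_Ico_eq_sum_range]

lemma sum_strip_comm (M : ℕ) (f : ℕ → ℕ → ℝ) :
    ∑ i ∈ range (M + 1), ∑ j ∈ range (M + 1 - i), f i j
      = ∑ j ∈ range (M + 1), ∑ i ∈ range (M + 1 - j), f i j := by
  have key : ∀ (g : ℕ → ℕ → ℝ), ∀ i ∈ range (M + 1),
      ∑ j ∈ range (M + 1 - i), g i j = ∑ j ∈ range (M + 1), if i + j ≤ M then g i j else 0 := by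
    intro g i hi
    have hi' : i < M + 1 := mem_range.mp hi
    have hset : Finset.filter (fun j => i + j ≤ M) (range (M + 1)) = range (M + 1 - i) := by
      ext j
      simp only [Finset.mem_filter, Finset.mem_range]
      omega
    rw [← Finset.sum_filter, hset]
  rw [Finset.sum_congr rfl (key f), Finset.sum_comm]
  refine Finset.sum_congr rfl fun j hj => ?_
  have hj' : j < M + 1 := mem_range.mp hj
  have hset : Finset.filter (fun i => i + j ≤ M) (range (M + 1)) = range (M + 1 - j) := by
    ext i
    simp only [Finset.mem_filter, Finset.mem_range]
    omega
  rw [← Finset.sum_filter, hset]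

/-! ### Euler-type cancellation -/

lemma euler_cancel_gen {q P b : ℝ} (hpne : ∀ m, qPoch P m ≠ 0)
    (hfac : ∀ m : ℕ, (1 : ℝ) - P ^ (m + 1) ≠ 0)
    (hqP : ∀ i : ℕ, q ^ (i * (i - 1)) * P ^ i = q ^ ((i + 1) * i)) (t : ℕ) :
    ∑ j ∈ range (t + 2), q ^ (j * (j - 1)) * b ^ j * (-b) ^ (t + 1 - j) /
      (qPoch P j * qPoch P (t + 1 - j)) = 0 := by
  have key : (1 - P ^ (t + 1)) *
      (∑ j ∈ range (t + 2), q ^ (j * (j - 1)) * b ^ j * (-b) ^ (t + 1 - j) /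
        (qPoch P j * qPoch P (t + 1 - j)))
      = ∑ j ∈ range (t + 2),
          ((if j = 0 then 0 else q ^ (j * (j - 1)) * b ^ j * (-b) ^ (t + 1 - j) /
              (qPoch P (j - 1) * qPoch P (t + 1 - j)))
            + (if j = t + 1 then 0 else q ^ (j * (j - 1)) * b ^ j * (-b) ^ (t + 1 - j) * P ^ j /
              (qPoch P j * qPoch P (t - j)))) := by
    rw [Finset.mul_sum]
    refine Finset.sum_congr rfl fun j hj => ?_
    have hjlt : j < t + 2 := mem_range.mp hj
    rcases Nat.eq_zero_or_pos j with h0 | h0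
    · subst h0
      rw [if_pos rfl, if_neg (Nat.succ_ne_zero t).symm, zero_add]
      simp only [Nat.zero_mul, Nat.sub_zero, pow_zero, mul_one, one_mul, qPoch_zero]
      rw [qPoch_succ P t]
      field_simp [hpne t, hfac t]
    · obtain ⟨j', rfl⟩ : ∃ j', j = j' + 1 := ⟨j - 1, by omega⟩
      by_cases hjt : j' + 1 = t + 1
      · have hj't : j' = t := by omega
        subst hj't
        rw [if_neg (Nat.succ_ne_zero j'), if_pos rfl, add_zero]
        simp only [Nat.sub_self, Nat.add_sub_cancel, pow_zero, mul_one, qPoch_zero]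
        rw [qPoch_succ P j']
        field_simp [hpne j', hfac j']
      · have hjle : j' + 1 ≤ t := by omega
        obtain ⟨u, hu⟩ : ∃ u, t - j' = u + 1 := ⟨t - j' - 1, by omega⟩
        rw [if_neg (Nat.succ_ne_zero j'), if_neg hjt]
        simp only [Nat.add_sub_cancel, Nat.add_sub_add_right]
        rw [hu, show t - (j' + 1) = u from by omega]
        rw [qPoch_succ P j', qPoch_succ P u,
          show P ^ (t + 1) = P ^ (j' + 1) * P ^ (u + 1) from by
            rw [← pow_add]; congr 1; omega]
        field_simp [hpne j', hpne u, hfac j', hfac u]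
        ring
  have h1 : ∑ j ∈ range (t + 2),
      (if j = 0 then (0 : ℝ) else q ^ (j * (j - 1)) * b ^ j * (-b) ^ (t + 1 - j) /
        (qPoch P (j - 1) * qPoch P (t + 1 - j)))
      = ∑ i ∈ range (t + 1), q ^ ((i + 1) * i) * b ^ (i + 1) * (-b) ^ (t - i) /
          (qPoch P i * qPoch P (t - i)) := by
    rw [Finset.sum_range_succ']
    simp only [reduceIte, add_zero]
    refine Finset.sum_congr rfl fun i _ => ?_
    rw [if_neg (Nat.succ_ne_zero i)]
    simp only [Nat.add_sub_cancel, Nat.add_sub_add_right]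
  have h2 : ∑ j ∈ range (t + 2),
      (if j = t + 1 then (0 : ℝ) else q ^ (j * (j - 1)) * b ^ j * (-b) ^ (t + 1 - j) * P ^ j /
        (qPoch P j * qPoch P (t - j)))
      = ∑ j ∈ range (t + 1), q ^ (j * (j - 1)) * b ^ j * (-b) ^ (t + 1 - j) * P ^ j /
          (qPoch P j * qPoch P (t - j)) := by
    rw [Finset.sum_range_succ, if_pos rfl, add_zero]
    refine Finset.sum_congr rfl fun j hj => ?_
    rw [if_neg (by have := mem_range.mp hj; omega)]
  have h3 : (∑ i ∈ range (t + 1), q ^ ((i + 1) * i) * b ^ (i + 1) * (-b) ^ (t - i) /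
          (qPoch P i * qPoch P (t - i)))
      + (∑ j ∈ range (t + 1), q ^ (j * (j - 1)) * b ^ j * (-b) ^ (t + 1 - j) * P ^ j /
          (qPoch P j * qPoch P (t - j))) = 0 := by
    rw [← Finset.sum_add_distrib]
    refine Finset.sum_eq_zero fun i hi => ?_
    have hit : i < t + 1 := mem_range.mp hi
    have hbb : (-b) ^ (t + 1 - i) = (-b) * (-b) ^ (t - i) := by
      rw [show t + 1 - i = (t - i) + 1 from by omega, pow_succ']
    have hb1 : b ^ (i + 1) = b * b ^ i := pow_succ' b i
    rw [hbb, hb1, ← hqP i]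
    ring
  rw [Finset.sum_add_distrib, h1, h2, h3] at key
  rcases mul_eq_zero.mp key with h | h
  · exact absurd h (hfac t)
  · exact h

lemma euler_cancel {q : ℝ} (hq : 0 < q) (hq1 : q < 1) (b : ℝ) (t : ℕ) :
    ∑ j ∈ range (t + 2), q ^ (j * (j - 1)) * b ^ j * (-b) ^ (t + 1 - j) /
      (qPoch (q ^ 2) j * qPoch (q ^ 2) (t + 1 - j)) = 0 := by
  refine euler_cancel_gen (qPochSq_ne_zero hq hq1) (one_sub_sq_pow_ne_zero hq hq1) ?_ t
  intro i
  rw [← pow_mul, ← pow_add]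
  congr 1
  cases i with
  | zero => rfl
  | succ s =>
    simp only [Nat.add_sub_cancel]
    ring

/-! ### Inverse property of the Hahn q²-addition -/

noncomputable def hahnF (q a b : ℝ) (K k j : ℕ) : ℝ :=
  q ^ (j * (j - 1)) * a ^ (k - j) * b ^ j * (-b) ^ (K - k) /
    (qPoch (q ^ 2) j * (qPoch (q ^ 2) (k - j) * qPoch (q ^ 2) (K - k)))

lemma hahn_inverse {q : ℝ} (hq : 0 < q) (hq1 : q < 1) (a b : ℝ) (K : ℕ) :
    ∑ k ∈ range (K + 1), hahnAddSq q a b k * (-b) ^ (K - k) /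
      (qPoch (q ^ 2) k * qPoch (q ^ 2) (K - k)) = a ^ K / qPoch (q ^ 2) K := by
  have hpne := qPochSq_ne_zero hq hq1
  have h1 : ∀ k ∈ range (K + 1), hahnAddSq q a b k * (-b) ^ (K - k) /
      (qPoch (q ^ 2) k * qPoch (q ^ 2) (K - k)) = ∑ j ∈ range (k + 1), hahnF q a b K k j := by
    intro k _
    rw [hahnAddSq, mul_assoc, mul_div_mul_left _ _ (hpne k), Finset.sum_mul, Finset.sum_div]
    refine Finset.sum_congr rfl fun j _ => ?_
    unfold hahnF
    ring
  have hz : ∀ s ∈ range (K + 1), s ≠ K →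
      ∑ j ∈ range (K + 1 - s), hahnF q a b K (j + s) j = 0 := by
    intro s hs hsK
    have hsK' : s < K := by have := mem_range.mp hs; omega
    obtain ⟨t', ht'⟩ : ∃ t', K - s = t' + 1 := ⟨K - s - 1, by omega⟩
    rw [show K + 1 - s = t' + 2 from by omega]
    have hterm : ∀ j ∈ range (t' + 2), hahnF q a b K (j + s) j
        = (q ^ (j * (j - 1)) * b ^ j * (-b) ^ (t' + 1 - j) /
            (qPoch (q ^ 2) j * qPoch (q ^ 2) (t' + 1 - j))) * (a ^ s / qPoch (q ^ 2) s) := by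
      intro j hj
      have hj' : j < t' + 2 := mem_range.mp hj
      unfold hahnF
      rw [show j + s - j = s from by omega, show K - (j + s) = t' + 1 - j from by omega]
      ring
    rw [Finset.sum_congr rfl hterm, ← Finset.sum_mul, euler_cancel hq hq1 b t', zero_mul]
  rw [Finset.sum_congr rfl h1, sum_triangle K (hahnF q a b K),
    sum_strip_comm K (fun j s => hahnF q a b K (j + s) j),
    Finset.sum_eq_single_of_mem K (self_mem_range_succ K) hz,
    show K + 1 - K = 1 from by omega, Finset.sum_range_one]
  unfold hahnF
  norm_num [qPoch_zero]

/-! ### Main theorem -/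

noncomputable def connG (q α x y ω : ℝ) (n k m : ℕ) : ℝ :=
  q ^ (-2 * (n : ℤ) * ((k + m : ℕ) : ℤ) + ((k + m : ℕ) : ℤ) * (2 * ((k + m : ℕ) : ℤ) + 1)) *
    hahnAddSq q (-ω) y k *
    ((-1 : ℝ) ^ m * x ^ (n - 2 * (k + m)) * y ^ m) /
    (qPoch (q ^ 2) k * (qPoch (q ^ 2) m * gqPoch q α (n - 2 * (k + m))))

lemma cancel_aux (A z S d : ℝ) (hz : z ≠ 0) : A * (z * S) / (d * z) = A * S / d := by
  rw [show A * (z * S) = z * (A * S) from by ring, mul_comm d z,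
    mul_div_mul_left _ _ hz]

theorem hTilde_connection_formula (q α x y ω : ℝ) (hq : 0 < q) (hq1 : q < 1)
    (hα : -1 < α) (n : ℕ) :
    hTilde q α x ω n =
      qPoch q n * ∑ k ∈ Finset.range (n / 2 + 1),
        q ^ (-2 * (n : ℤ) * (k : ℤ) + (k : ℤ) * (2 * (k : ℤ) + 1)) * hahnAddSq q (-ω) y k *
          hTilde q α x y (n - 2 * k) / (qPoch (q ^ 2) k * qPoch q (n - 2 * k)) := by
  have hp := qPochSq_ne_zero hq hq1
  have hpq := qPoch_ne_zero hq hq1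
  have hg := gqPoch_ne_zero hq hq1 hα
  conv_lhs => rw [hTilde]
  set N := n / 2 with hN
  have stepA : ∀ k ∈ range (N + 1),
      q ^ (-2 * (n : ℤ) * (k : ℤ) + (k : ℤ) * (2 * (k : ℤ) + 1)) * hahnAddSq q (-ω) y k *
          hTilde q α x y (n - 2 * k) / (qPoch (q ^ 2) k * qPoch q (n - 2 * k))
        = ∑ m ∈ range (N + 1 - k), connG q α x y ω n k m := by
    intro k hk
    have hkN : k ≤ N := by have := mem_range.mp hk; omega
    have h2k : 2 * k ≤ n := by omega
    rw [hTilde]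
    rw [show (n - 2 * k) / 2 + 1 = N + 1 - k from by omega]
    rw [cancel_aux _ _ _ _ (hpq (n - 2 * k)), Finset.mul_sum, Finset.sum_div]
    refine Finset.sum_congr rfl fun m hm => ?_
    have hmN : m < N + 1 - k := mem_range.mp hm
    have h2km : 2 * (k + m) ≤ n := by omega
    have hcast : ((n - 2 * k : ℕ) : ℤ) = (n : ℤ) - 2 * k := by
      push_cast [h2k]; ring
    have hexp : q ^ (-2 * (n : ℤ) * (k : ℤ) + (k : ℤ) * (2 * (k : ℤ) + 1)) *
        q ^ (-2 * ((n - 2 * k : ℕ) : ℤ) * (m : ℤ) + (m : ℤ) * (2 * (m : ℤ) + 1))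
        = q ^ (-2 * (n : ℤ) * ((k + m : ℕ) : ℤ) +
            ((k + m : ℕ) : ℤ) * (2 * ((k + m : ℕ) : ℤ) + 1)) := by
      rw [← zpow_add₀ (ne_of_gt hq)]
      congr 1
      rw [hcast]
      push_cast
      ring
    unfold connG
    conv_rhs => rw [← hexp]
    rw [show n - 2 * k - 2 * m = n - 2 * (k + m) from by omega]
    ring
  have stepB : ∑ k ∈ range (N + 1), ∑ m ∈ range (N + 1 - k), connG q α x y ω n k m
      = ∑ K ∈ range (N + 1), ∑ k ∈ range (K + 1), connG q α x y ω n k (K - k) := by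
    rw [sum_triangle N (fun K k => connG q α x y ω n k (K - k))]
    refine Finset.sum_congr rfl fun j _ => Finset.sum_congr rfl fun s _ => ?_
    rw [Nat.add_sub_cancel_left]
  have stepC : ∀ K ∈ range (N + 1),
      ∑ k ∈ range (K + 1), connG q α x y ω n k (K - k)
        = (-1 : ℝ) ^ K * q ^ (-2 * (n : ℤ) * (K : ℤ) + (K : ℤ) * (2 * (K : ℤ) + 1)) *
            x ^ (n - 2 * K) * ω ^ K / (gqPoch q α (n - 2 * K) * qPoch (q ^ 2) K) := by
    intro K hK
    have hterm : ∀ k ∈ range (K + 1), connG q α x y ω n k (K - k)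
        = (q ^ (-2 * (n : ℤ) * (K : ℤ) + (K : ℤ) * (2 * (K : ℤ) + 1)) * x ^ (n - 2 * K) /
            gqPoch q α (n - 2 * K)) *
          (hahnAddSq q (-ω) y k * (-y) ^ (K - k) /
            (qPoch (q ^ 2) k * qPoch (q ^ 2) (K - k))) := by
      intro k hk
      have hkK : k ≤ K := by have := mem_range.mp hk; omega
      unfold connG
      rw [show k + (K - k) = K from by omega, neg_pow y]
      ring
    rw [Finset.sum_congr rfl hterm, ← Finset.mul_sum, hahn_inverse hq hq1 (-ω) y K,
      neg_pow ω]
    ring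
  congr 1
  exact ((Finset.sum_congr rfl stepA).trans (stepB.trans (Finset.sum_congr rfl stepC))).symm
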